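/- Canonicity for sums: for every closed well-typed term ⊢ t : A₁ + A₂, the configuration ⟨⟦t⟧ | α⟩ reduces to a normal configuration of the form ⟨inj₁ u | α⟩ or ⟨inj₂ u | α⟩ for some term u. -/

import Mathlib

mutual
/-- μμ̃ machine terms. -/
inductive MTm where
  | var : Nat → MTm
  | mu : MMach → MTm            -- μα.m, binds co-variable 0
  | muPair : MMach → MTm        -- μ(x·α).m, binds variable 0 and co-variable 0
  | injl : MTm → MTm
  | injr : MTm → MTm
/-- μμ̃ machine co-terms (contexts). -/
inductive MCo where
  | covar : Nat → MCo
  | cons : MTm → MCo → MCo      -- t·e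
  | mutilde : MMach → MCo       -- μ̃x.m, binds variable 0
  | case : MMach → MMach → MCo  -- μ̃[inj₁x₁.m₁ | inj₂x₂.m₂], each branch binds variable 0
/-- μμ̃ machine configurations ⟨t | e⟩. -/
inductive MMach where
  | conf : MTm → MCo → MMach
end

/-- Lift a renaming under a binder. -/
def liftN (f : Nat → Nat) : Nat → Nat
  | 0 => 0
  | n + 1 => f n + 1

mutual
/-- Simultaneous renaming of variables (ft) and co-variables (fc). -/
def MTm.rename (ft fc : Nat → Nat) : MTm → MTm
  | .var n => .var (ft n)
  | .mu m => .mu (MMach.rename ft (liftN fc) m)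
  | .muPair m => .muPair (MMach.rename (liftN ft) (liftN fc) m)
  | .injl t => .injl (MTm.rename ft fc t)
  | .injr t => .injr (MTm.rename ft fc t)
def MCo.rename (ft fc : Nat → Nat) : MCo → MCo
  | .covar n => .covar (fc n)
  | .cons t e => .cons (MTm.rename ft fc t) (MCo.rename ft fc e)
  | .mutilde m => .mutilde (MMach.rename (liftN ft) fc m)
  | .case m₁ m₂ => .case (MMach.rename (liftN ft) fc m₁) (MMach.rename (liftN ft) fc m₂)
def MMach.rename (ft fc : Nat → Nat) : MMach → MMach
  | .conf t e => .conf (MTm.rename ft fc t) (MCo.rename ft fc e)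
end

/-- Lift a substitution under a variable binder. -/
def upT (σt : Nat → MTm) (σc : Nat → MCo) : (Nat → MTm) × (Nat → MCo) :=
  (fun n => match n with
    | 0 => .var 0
    | n + 1 => MTm.rename Nat.succ id (σt n),
   fun n => MCo.rename Nat.succ id (σc n))

/-- Lift a substitution under a co-variable binder. -/
def upC (σt : Nat → MTm) (σc : Nat → MCo) : (Nat → MTm) × (Nat → MCo) :=
  (fun n => MTm.rename id Nat.succ (σt n),
   fun n => match n with
    | 0 => .covar 0
    | n + 1 => MCo.rename id Nat.succ (σc n))

mutual
/-- Simultaneous substitution of terms for variables and co-terms for co-variables. -/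
def MTm.subst (σt : Nat → MTm) (σc : Nat → MCo) : MTm → MTm
  | .var n => σt n
  | .mu m => .mu (MMach.subst (upC σt σc).1 (upC σt σc).2 m)
  | .muPair m =>
      .muPair (MMach.subst (upT (upC σt σc).1 (upC σt σc).2).1
                           (upT (upC σt σc).1 (upC σt σc).2).2 m)
  | .injl t => .injl (MTm.subst σt σc t)
  | .injr t => .injr (MTm.subst σt σc t)
def MCo.subst (σt : Nat → MTm) (σc : Nat → MCo) : MCo → MCo
  | .covar n => σc n
  | .cons t e => .cons (MTm.subst σt σc t) (MCo.subst σt σc e)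
  | .mutilde m => .mutilde (MMach.subst (upT σt σc).1 (upT σt σc).2 m)
  | .case m₁ m₂ => .case (MMach.subst (upT σt σc).1 (upT σt σc).2 m₁)
                         (MMach.subst (upT σt σc).1 (upT σt σc).2 m₂)
def MMach.subst (σt : Nat → MTm) (σc : Nat → MCo) : MMach → MMach
  | .conf t e => .conf (MTm.subst σt σc t) (MCo.subst σt σc e)
end

/-- m[e/α] : substitute co-term `e` for co-variable 0. -/
def MMach.substCo (m : MMach) (e : MCo) : MMach :=
  MMach.subst MTm.var (fun n => match n with | 0 => e | n + 1 => .covar n) m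

/-- m[t/x] : substitute term `t` for variable 0. -/
def MMach.substTm (m : MMach) (t : MTm) : MMach :=
  MMach.subst (fun n => match n with | 0 => t | n + 1 => .var n) MCo.covar m

/-- m[t/x, e/α] : substitute both a term and a co-term. -/
def MMach.substTmCo (m : MMach) (t : MTm) (e : MCo) : MMach :=
  MMach.subst (fun n => match n with | 0 => t | n + 1 => .var n)
              (fun n => match n with | 0 => e | n + 1 => .covar n) m

mutual
/-- Reduction of μμ̃ terms (congruence). -/
inductive StepT : MTm → MTm → Prop
  | mu {m m'} : StepM m m' → StepT (.mu m) (.mu m')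
  | muPair {m m'} : StepM m m' → StepT (.muPair m) (.muPair m')
  | injl {t t'} : StepT t t' → StepT (.injl t) (.injl t')
  | injr {t t'} : StepT t t' → StepT (.injr t) (.injr t')
/-- Reduction of μμ̃ co-terms (congruence). -/
inductive StepC : MCo → MCo → Prop
  | consl {t t'} (e) : StepT t t' → StepC (.cons t e) (.cons t' e)
  | consr (t) {e e'} : StepC e e' → StepC (.cons t e) (.cons t e')
  | mutilde {m m'} : StepM m m' → StepC (.mutilde m) (.mutilde m')
  | casel {m₁ m₁'} (m₂) : StepM m₁ m₁' → StepC (.case m₁ m₂) (.case m₁' m₂)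
  | caser (m₁) {m₂ m₂'} : StepM m₂ m₂' → StepC (.case m₁ m₂) (.case m₁ m₂')
/-- Reduction of μμ̃ machine configurations. -/
inductive StepM : MMach → MMach → Prop
  | mu (m : MMach) (e : MCo) : StepM (.conf (.mu m) e) (m.substCo e)
  | mutilde (t : MTm) (m : MMach) : StepM (.conf t (.mutilde m)) (m.substTm t)
  | muPair (m : MMach) (u : MTm) (e : MCo) :
      StepM (.conf (.muPair m) (.cons u e)) (m.substTmCo u e)
  | casel (t : MTm) (m₁ m₂ : MMach) :
      StepM (.conf (.injl t) (.case m₁ m₂)) (m₁.substTm t)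
  | caser (t : MTm) (m₁ m₂ : MMach) :
      StepM (.conf (.injr t) (.case m₁ m₂)) (m₂.substTm t)
  | congT {t t'} (e) : StepT t t' → StepM (.conf t e) (.conf t' e)
  | congC (t) {e e'} : StepC e e' → StepM (.conf t e) (.conf t e')
end

/-- Source λ-calculus with sums (de Bruijn). In `case t u₁ u₂` each branch binds
variable 0. -/
inductive LTm where
  | var : Nat → LTm
  | lam : LTm → LTm
  | app : LTm → LTm → LTm
  | injl : LTm → LTm
  | injr : LTm → LTm
  | case : LTm → LTm → LTm → LTm

/-- Compilation of λ-terms with sums into the μμ̃ machine (call-by-name). -/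
def transl : LTm → MTm
  | .var n => .var n
  | .lam t => .muPair (.conf (transl t) (.covar 0))
  | .app t u => .mu (.conf (transl t) (.cons (transl u) (.covar 0)))
  | .injl t => .injl (transl t)
  | .injr t => .injr (transl t)
  | .case t u₁ u₂ =>
      .mu (.conf (transl t)
        (.case (.conf (transl u₁) (.covar 0)) (.conf (transl u₂) (.covar 0))))

/-- Simple types: a (positive) base type, function types and sum types. -/
inductive Ty where
  | base : Ty
  | arrow : Ty → Ty → Ty
  | sum : Ty → Ty → Ty

/-- Typing judgment of the simply-typed λ-calculus with sums. -/
inductive HasTy : List Ty → LTm → Ty → Prop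
  | var {Γ n A} : Γ[n]? = some A → HasTy Γ (.var n) A
  | lam {Γ t A B} : HasTy (A :: Γ) t B → HasTy Γ (.lam t) (.arrow A B)
  | app {Γ t u A B} : HasTy Γ t (.arrow A B) → HasTy Γ u A → HasTy Γ (.app t u) B
  | injl {Γ t A B} : HasTy Γ t A → HasTy Γ (.injl t) (.sum A B)
  | injr {Γ t A B} : HasTy Γ t B → HasTy Γ (.injr t) (.sum A B)
  | case {Γ t u₁ u₂ A B C} : HasTy Γ t (.sum A B) → HasTy (A :: Γ) u₁ C →
      HasTy (B :: Γ) u₂ C → HasTy Γ (.case t u₁ u₂) C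

/-!
Two realizability interpretations of the types over the μμ̃ machine, both adequate for the
translation of typed λ-terms under substitutions realizing the context.

The first has weak normalisation as its pole. Its truth and falsity values quantify over all
renamings, so that they survive the shifts made when substituting under a binder, and every
variable and co-variable realizes every type; adequacy then says that typed terms normalise.

The second has as pole the machines reducing to a normal ⟨inj₁ u | α⟩ or ⟨inj₂ u | α⟩. It is
closed under anti-reduction, and α is orthogonal to the sum values inj₁ u, inj₂ u as soon as u
normalises, which is why these values also ask for truth in the first interpretation. Adequacy
at the empty context, tested against α, gives the theorem.
-/

open Relation

/-! ### Substitution algebra -/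

@[simp] theorem liftN_zero (f : ℕ → ℕ) : liftN f 0 = 0 := rfl

@[simp] theorem liftN_succ (f : ℕ → ℕ) (n : ℕ) : liftN f (n + 1) = f n + 1 := rfl

theorem liftN_comp (f g : ℕ → ℕ) :
    (fun n => liftN f (liftN g n)) = liftN (fun n => f (g n)) := by
  funext n; cases n <;> rfl

theorem liftN_id : liftN (fun n => n) = fun n => n := by
  funext n; cases n <;> rfl

@[simp] theorem upT_fst_zero (σt : ℕ → MTm) (σc : ℕ → MCo) : (upT σt σc).1 0 = .var 0 := rfl

@[simp] theorem upT_fst_succ (σt : ℕ → MTm) (σc : ℕ → MCo) (n : ℕ) :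
    (upT σt σc).1 (n + 1) = (σt n).rename Nat.succ id := rfl

@[simp] theorem upT_snd (σt : ℕ → MTm) (σc : ℕ → MCo) (n : ℕ) :
    (upT σt σc).2 n = (σc n).rename Nat.succ id := rfl

@[simp] theorem upC_fst (σt : ℕ → MTm) (σc : ℕ → MCo) (n : ℕ) :
    (upC σt σc).1 n = (σt n).rename id Nat.succ := rfl

@[simp] theorem upC_snd_zero (σt : ℕ → MTm) (σc : ℕ → MCo) : (upC σt σc).2 0 = .covar 0 := rfl

@[simp] theorem upC_snd_succ (σt : ℕ → MTm) (σc : ℕ → MCo) (n : ℕ) :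
    (upC σt σc).2 (n + 1) = (σc n).rename id Nat.succ := rfl

@[simp] theorem MTm.rename_var (f g : ℕ → ℕ) (n : ℕ) : (MTm.var n).rename f g = .var (f n) := rfl

@[simp] theorem MCo.rename_covar (f g : ℕ → ℕ) (n : ℕ) :
    (MCo.covar n).rename f g = .covar (g n) := rfl

@[simp] theorem MTm.subst_var (σt : ℕ → MTm) (σc : ℕ → MCo) (n : ℕ) :
    (MTm.var n).subst σt σc = σt n := rfl

@[simp] theorem MCo.subst_covar (σt : ℕ → MTm) (σc : ℕ → MCo) (n : ℕ) :
    (MCo.covar n).subst σt σc = σc n := rfl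

mutual
@[simp] theorem MTm.rename_rename (f g f' g' : ℕ → ℕ) : ∀ t : MTm,
    (t.rename f g).rename f' g' = t.rename (fun n => f' (f n)) (fun n => g' (g n))
  | .var _ => rfl
  | .mu m => by simp only [MTm.rename, MMach.rename_rename _ _ _ _ m, liftN_comp]
  | .muPair m => by simp only [MTm.rename, MMach.rename_rename _ _ _ _ m, liftN_comp]
  | .injl t => by simp only [MTm.rename, MTm.rename_rename _ _ _ _ t]
  | .injr t => by simp only [MTm.rename, MTm.rename_rename _ _ _ _ t]
@[simp] theorem MCo.rename_rename (f g f' g' : ℕ → ℕ) : ∀ e : MCo,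
    (e.rename f g).rename f' g' = e.rename (fun n => f' (f n)) (fun n => g' (g n))
  | .covar _ => rfl
  | .cons t e => by simp only [MCo.rename, MTm.rename_rename _ _ _ _ t, MCo.rename_rename _ _ _ _ e]
  | .mutilde m => by simp only [MCo.rename, MMach.rename_rename _ _ _ _ m, liftN_comp]
  | .case m₁ m₂ => by
      simp only [MCo.rename, MMach.rename_rename _ _ _ _ m₁, MMach.rename_rename _ _ _ _ m₂,
        liftN_comp]
@[simp] theorem MMach.rename_rename (f g f' g' : ℕ → ℕ) : ∀ m : MMach,
    (m.rename f g).rename f' g' = m.rename (fun n => f' (f n)) (fun n => g' (g n))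
  | .conf t e => by
      simp only [MMach.rename, MTm.rename_rename _ _ _ _ t, MCo.rename_rename _ _ _ _ e]
end

mutual
@[simp] theorem MTm.rename_id : ∀ t : MTm, t.rename (fun n => n) (fun n => n) = t
  | .var _ => rfl
  | .mu m => by simp only [MTm.rename, liftN_id, MMach.rename_id m]
  | .muPair m => by simp only [MTm.rename, liftN_id, MMach.rename_id m]
  | .injl t => by simp only [MTm.rename, MTm.rename_id t]
  | .injr t => by simp only [MTm.rename, MTm.rename_id t]
@[simp] theorem MCo.rename_id : ∀ e : MCo, e.rename (fun n => n) (fun n => n) = e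
  | .covar _ => rfl
  | .cons t e => by simp only [MCo.rename, MTm.rename_id t, MCo.rename_id e]
  | .mutilde m => by simp only [MCo.rename, liftN_id, MMach.rename_id m]
  | .case m₁ m₂ => by simp only [MCo.rename, liftN_id, MMach.rename_id m₁, MMach.rename_id m₂]
@[simp] theorem MMach.rename_id : ∀ m : MMach, m.rename (fun n => n) (fun n => n) = m
  | .conf t e => by simp only [MMach.rename, MTm.rename_id t, MCo.rename_id e]
end

mutual
@[simp] theorem MTm.subst_rename (σt : ℕ → MTm) (σc : ℕ → MCo) (f g : ℕ → ℕ) : ∀ t : MTm,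
    (t.rename f g).subst σt σc = t.subst (fun n => σt (f n)) (fun n => σc (g n))
  | .var _ => rfl
  | .mu m => by
      simp only [MTm.rename, MTm.subst, MMach.subst_rename _ _ _ _ m]
      congr 2; funext n; cases n <;> rfl
  | .muPair m => by
      simp only [MTm.rename, MTm.subst, MMach.subst_rename _ _ _ _ m]
      congr 2 <;> (funext n; cases n <;> rfl)
  | .injl t => by simp only [MTm.rename, MTm.subst, MTm.subst_rename _ _ _ _ t]
  | .injr t => by simp only [MTm.rename, MTm.subst, MTm.subst_rename _ _ _ _ t]
@[simp] theorem MCo.subst_rename (σt : ℕ → MTm) (σc : ℕ → MCo) (f g : ℕ → ℕ) : ∀ e : MCo,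
    (e.rename f g).subst σt σc = e.subst (fun n => σt (f n)) (fun n => σc (g n))
  | .covar _ => rfl
  | .cons t e => by
      simp only [MCo.rename, MCo.subst, MTm.subst_rename _ _ _ _ t, MCo.subst_rename _ _ _ _ e]
  | .mutilde m => by
      simp only [MCo.rename, MCo.subst, MMach.subst_rename _ _ _ _ m]
      congr 2; funext n; cases n <;> rfl
  | .case m₁ m₂ => by
      simp only [MCo.rename, MCo.subst, MMach.subst_rename _ _ _ _ m₁,
        MMach.subst_rename _ _ _ _ m₂]
      congr 2 <;> (funext n; cases n <;> rfl)
@[simp] theorem MMach.subst_rename (σt : ℕ → MTm) (σc : ℕ → MCo) (f g : ℕ → ℕ) : ∀ m : MMach,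
    (m.rename f g).subst σt σc = m.subst (fun n => σt (f n)) (fun n => σc (g n))
  | .conf t e => by
      simp only [MMach.rename, MMach.subst, MTm.subst_rename _ _ _ _ t, MCo.subst_rename _ _ _ _ e]
end

mutual
@[simp] theorem MTm.rename_subst (σt : ℕ → MTm) (σc : ℕ → MCo) (f g : ℕ → ℕ) : ∀ t : MTm,
    (t.subst σt σc).rename f g
      = t.subst (fun n => (σt n).rename f g) (fun n => (σc n).rename f g)
  | .var _ => rfl
  | .mu m => by
      simp only [MTm.rename, MTm.subst, MMach.rename_subst _ _ _ _ m]
      congr 2 <;> (funext n; cases n <;> simp)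
  | .muPair m => by
      simp only [MTm.rename, MTm.subst, MMach.rename_subst _ _ _ _ m]
      congr 2 <;> (funext n; cases n <;> simp)
  | .injl t => by simp only [MTm.rename, MTm.subst, MTm.rename_subst _ _ _ _ t]
  | .injr t => by simp only [MTm.rename, MTm.subst, MTm.rename_subst _ _ _ _ t]
@[simp] theorem MCo.rename_subst (σt : ℕ → MTm) (σc : ℕ → MCo) (f g : ℕ → ℕ) : ∀ e : MCo,
    (e.subst σt σc).rename f g
      = e.subst (fun n => (σt n).rename f g) (fun n => (σc n).rename f g)
  | .covar _ => rfl
  | .cons t e => by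
      simp only [MCo.rename, MCo.subst, MTm.rename_subst _ _ _ _ t, MCo.rename_subst _ _ _ _ e]
  | .mutilde m => by
      simp only [MCo.rename, MCo.subst, MMach.rename_subst _ _ _ _ m]
      congr 2 <;> (funext n; cases n <;> simp)
  | .case m₁ m₂ => by
      simp only [MCo.rename, MCo.subst, MMach.rename_subst _ _ _ _ m₁,
        MMach.rename_subst _ _ _ _ m₂]
      congr 2 <;> (funext n; cases n <;> simp)
@[simp] theorem MMach.rename_subst (σt : ℕ → MTm) (σc : ℕ → MCo) (f g : ℕ → ℕ) : ∀ m : MMach,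
    (m.subst σt σc).rename f g
      = m.subst (fun n => (σt n).rename f g) (fun n => (σc n).rename f g)
  | .conf t e => by
      simp only [MMach.rename, MMach.subst, MTm.rename_subst _ _ _ _ t, MCo.rename_subst _ _ _ _ e]
end

mutual
@[simp] theorem MTm.subst_subst (σt τt : ℕ → MTm) (σc τc : ℕ → MCo) : ∀ t : MTm,
    (t.subst σt σc).subst τt τc
      = t.subst (fun n => (σt n).subst τt τc) (fun n => (σc n).subst τt τc)
  | .var _ => rfl
  | .mu m => by
      simp only [MTm.subst, MMach.subst_subst _ _ _ _ m]
      congr 2 <;> (funext n; cases n <;> simp)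
  | .muPair m => by
      simp only [MTm.subst, MMach.subst_subst _ _ _ _ m]
      congr 2 <;> (funext n; cases n <;> simp)
  | .injl t => by simp only [MTm.subst, MTm.subst_subst _ _ _ _ t]
  | .injr t => by simp only [MTm.subst, MTm.subst_subst _ _ _ _ t]
@[simp] theorem MCo.subst_subst (σt τt : ℕ → MTm) (σc τc : ℕ → MCo) : ∀ e : MCo,
    (e.subst σt σc).subst τt τc
      = e.subst (fun n => (σt n).subst τt τc) (fun n => (σc n).subst τt τc)
  | .covar _ => rfl
  | .cons t e => by
      simp only [MCo.subst, MTm.subst_subst _ _ _ _ t, MCo.subst_subst _ _ _ _ e]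
  | .mutilde m => by
      simp only [MCo.subst, MMach.subst_subst _ _ _ _ m]
      congr 2 <;> (funext n; cases n <;> simp)
  | .case m₁ m₂ => by
      simp only [MCo.subst, MMach.subst_subst _ _ _ _ m₁, MMach.subst_subst _ _ _ _ m₂]
      congr 2 <;> (funext n; cases n <;> simp)
@[simp] theorem MMach.subst_subst (σt τt : ℕ → MTm) (σc τc : ℕ → MCo) : ∀ m : MMach,
    (m.subst σt σc).subst τt τc
      = m.subst (fun n => (σt n).subst τt τc) (fun n => (σc n).subst τt τc)
  | .conf t e => by
      simp only [MMach.subst, MTm.subst_subst _ _ _ _ t, MCo.subst_subst _ _ _ _ e]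
end

mutual
@[simp] theorem MTm.subst_var_covar (f g : ℕ → ℕ) : ∀ t : MTm,
    t.subst (fun n => .var (f n)) (fun n => .covar (g n)) = t.rename f g
  | .var _ => rfl
  | .mu m => by
      simp only [MTm.subst, MTm.rename, ← MMach.subst_var_covar _ _ m]
      congr 2; funext n; cases n <;> rfl
  | .muPair m => by
      simp only [MTm.subst, MTm.rename, ← MMach.subst_var_covar _ _ m]
      congr 2 <;> (funext n; cases n <;> rfl)
  | .injl t => by simp only [MTm.subst, MTm.rename, MTm.subst_var_covar _ _ t]
  | .injr t => by simp only [MTm.subst, MTm.rename, MTm.subst_var_covar _ _ t]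
@[simp] theorem MCo.subst_var_covar (f g : ℕ → ℕ) : ∀ e : MCo,
    e.subst (fun n => .var (f n)) (fun n => .covar (g n)) = e.rename f g
  | .covar _ => rfl
  | .cons t e => by
      simp only [MCo.subst, MCo.rename, MTm.subst_var_covar _ _ t, MCo.subst_var_covar _ _ e]
  | .mutilde m => by
      simp only [MCo.subst, MCo.rename, ← MMach.subst_var_covar _ _ m]
      congr 2; funext n; cases n <;> rfl
  | .case m₁ m₂ => by
      simp only [MCo.subst, MCo.rename, ← MMach.subst_var_covar _ _ m₁,
        ← MMach.subst_var_covar _ _ m₂]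
      congr 2 <;> (funext n; cases n <;> rfl)
@[simp] theorem MMach.subst_var_covar (f g : ℕ → ℕ) : ∀ m : MMach,
    m.subst (fun n => .var (f n)) (fun n => .covar (g n)) = m.rename f g
  | .conf t e => by
      simp only [MMach.subst, MMach.rename, MTm.subst_var_covar _ _ t, MCo.subst_var_covar _ _ e]
end

@[simp] theorem MTm.subst_id (t : MTm) : t.subst .var .covar = t :=
  (t.subst_var_covar (fun n => n) (fun n => n)).trans t.rename_id

@[simp] theorem MCo.subst_id (e : MCo) : e.subst .var .covar = e :=
  (e.subst_var_covar (fun n => n) (fun n => n)).trans e.rename_id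

@[simp] theorem MMach.subst_id (m : MMach) : m.subst .var .covar = m :=
  (m.subst_var_covar (fun n => n) (fun n => n)).trans m.rename_id

def consT (u : MTm) (σ : ℕ → MTm) : ℕ → MTm
  | 0 => u
  | n + 1 => σ n

def consC (e : MCo) (σ : ℕ → MCo) : ℕ → MCo
  | 0 => e
  | n + 1 => σ n

@[simp] theorem consT_zero (u : MTm) (σ : ℕ → MTm) : consT u σ 0 = u := rfl

@[simp] theorem consT_succ (u : MTm) (σ : ℕ → MTm) (n : ℕ) : consT u σ (n + 1) = σ n := rfl

@[simp] theorem consC_zero (e : MCo) (σ : ℕ → MCo) : consC e σ 0 = e := rfl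

@[simp] theorem consC_succ (e : MCo) (σ : ℕ → MCo) (n : ℕ) : consC e σ (n + 1) = σ n := rfl

theorem MMach.substCo_eq_subst (m : MMach) (e : MCo) :
    m.substCo e = m.subst .var (consC e .covar) := rfl

theorem MMach.substTm_eq_subst (m : MMach) (t : MTm) :
    m.substTm t = m.subst (consT t .var) .covar := rfl

theorem MMach.substTmCo_eq_subst (m : MMach) (t : MTm) (e : MCo) :
    m.substTmCo t e = m.subst (consT t .var) (consC e .covar) := rfl

theorem MMach.substTmCo_rename_subst_upT_upC (m : MMach) (σ : ℕ → MTm) (τ : ℕ → MCo)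
    (f g : ℕ → ℕ) (u : MTm) (e : MCo) :
    ((m.subst (upT (upC σ τ).1 (upC σ τ).2).1 (upT (upC σ τ).1 (upC σ τ).2).2).rename
      (liftN f) (liftN g)).substTmCo u e
      = m.subst (consT u fun n => (σ n).rename f g) (consC e fun n => (τ n).rename f g) := by
  simp only [MMach.substTmCo_eq_subst, MMach.rename_subst, MMach.subst_subst]
  congr 1 <;> funext n <;> cases n <;> simp

theorem MMach.substCo_rename_subst_upC (m : MMach) (σ : ℕ → MTm) (τ : ℕ → MCo)
    (f g : ℕ → ℕ) (e : MCo) :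
    ((m.subst (upC σ τ).1 (upC σ τ).2).rename f (liftN g)).substCo e
      = m.subst (fun n => (σ n).rename f g) (consC e fun n => (τ n).rename f g) := by
  simp only [MMach.substCo_eq_subst, MMach.rename_subst, MMach.subst_subst]
  congr 1 <;> funext n <;> cases n <;> simp

theorem MMach.substTm_rename_subst_upT (m : MMach) (σ : ℕ → MTm) (τ : ℕ → MCo)
    (f g : ℕ → ℕ) (p : MTm) :
    ((m.subst (upT σ τ).1 (upT σ τ).2).rename (liftN f) g).substTm p
      = m.subst (consT p fun n => (σ n).rename f g) (fun n => (τ n).rename f g) := by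
  simp only [MMach.substTm_eq_subst, MMach.rename_subst, MMach.subst_subst]
  congr 1 <;> funext n <;> cases n <;> simp

theorem MMach.substTmCo_subst_upT_upC (m : MMach) (σ : ℕ → MTm) (τ : ℕ → MCo)
    (u : MTm) (e : MCo) :
    (m.subst (upT (upC σ τ).1 (upC σ τ).2).1 (upT (upC σ τ).1 (upC σ τ).2).2).substTmCo u e
      = m.subst (consT u σ) (consC e τ) := by
  simp only [MMach.substTmCo_eq_subst, MMach.subst_subst]
  congr 1 <;> funext n <;> cases n <;> simp

theorem MMach.substCo_subst_upC (m : MMach) (σ : ℕ → MTm) (τ : ℕ → MCo) (e : MCo) :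
    (m.subst (upC σ τ).1 (upC σ τ).2).substCo e = m.subst σ (consC e τ) := by
  simp only [MMach.substCo_eq_subst, MMach.subst_subst]
  congr 1 <;> funext n <;> cases n <;> simp

theorem MMach.substTm_subst_upT (m : MMach) (σ : ℕ → MTm) (τ : ℕ → MCo) (p : MTm) :
    (m.subst (upT σ τ).1 (upT σ τ).2).substTm p = m.subst (consT p σ) τ := by
  simp only [MMach.substTm_eq_subst, MMach.subst_subst]
  congr 1 <;> funext n <;> cases n <;> simp

theorem MMach.substCo_covar_zero_rename_liftN_succ (m : MMach) :
    (m.rename id (liftN Nat.succ)).substCo (.covar 0) = m := by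
  rw [MMach.substCo_eq_subst, MMach.subst_rename]
  conv_rhs => rw [← m.subst_id]
  congr 1; funext n; cases n <;> rfl

/-! ### Normal forms and weak normalisation -/

def IsRedex : MTm → MCo → Prop
  | .mu _, _ => True
  | _, .mutilde _ => True
  | .muPair _, .cons _ _ => True
  | .injl _, .case _ _ => True
  | .injr _, .case _ _ => True
  | _, _ => False

@[simp] theorem isRedex_rename {t : MTm} {e : MCo} (f g : ℕ → ℕ) :
    IsRedex (t.rename f g) (e.rename f g) ↔ IsRedex t e := by
  cases t <;> cases e <;> simp [IsRedex, MTm.rename, MCo.rename]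

mutual
def MTm.Normal : MTm → Prop
  | .var _ => True
  | .mu m | .muPair m => m.Normal
  | .injl t | .injr t => t.Normal
def MCo.Normal : MCo → Prop
  | .covar _ => True
  | .cons t e => t.Normal ∧ e.Normal
  | .mutilde m => m.Normal
  | .case m₁ m₂ => m₁.Normal ∧ m₂.Normal
def MMach.Normal : MMach → Prop
  | .conf t e => t.Normal ∧ e.Normal ∧ ¬ IsRedex t e
end

mutual
theorem StepT.not_normal : ∀ {t t' : MTm}, StepT t t' → ¬ t.Normal
  | _, _, .mu h | _, _, .muPair h => h.not_normal
  | _, _, .injl h | _, _, .injr h => h.not_normal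
theorem StepC.not_normal : ∀ {e e' : MCo}, StepC e e' → ¬ e.Normal
  | _, _, .consl _ h => fun hn => h.not_normal hn.1
  | _, _, .consr _ h => fun hn => h.not_normal hn.2
  | _, _, .mutilde h => h.not_normal
  | _, _, .casel _ h => fun hn => h.not_normal hn.1
  | _, _, .caser _ h => fun hn => h.not_normal hn.2
theorem StepM.not_normal : ∀ {m m' : MMach}, StepM m m' → ¬ m.Normal
  | _, _, .congT _ h => fun hn => h.not_normal hn.1
  | _, _, .congC _ h => fun hn => h.not_normal hn.2.1
  | _, _, .mutilde t _ => fun hn => hn.2.2 (by cases t <;> trivial)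
  | _, _, .mu .. | _, _, .muPair .. | _, _, .casel .. | _, _, .caser .. => fun hn => hn.2.2 trivial
end

mutual
theorem MTm.Normal.rename (f g : ℕ → ℕ) : ∀ {t : MTm}, t.Normal → (t.rename f g).Normal
  | .var _, h => h
  | .mu m, h | .muPair m, h => MMach.Normal.rename (m := m) _ _ h
  | .injl t, h | .injr t, h => MTm.Normal.rename (t := t) _ _ h
theorem MCo.Normal.rename (f g : ℕ → ℕ) : ∀ {e : MCo}, e.Normal → (e.rename f g).Normal
  | .covar _, h => h
  | .cons _ _, h => ⟨MTm.Normal.rename _ _ h.1, MCo.Normal.rename _ _ h.2⟩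
  | .mutilde _, h => MMach.Normal.rename _ _ h
  | .case _ _, h => ⟨MMach.Normal.rename _ _ h.1, MMach.Normal.rename _ _ h.2⟩
theorem MMach.Normal.rename (f g : ℕ → ℕ) : ∀ {m : MMach}, m.Normal → (m.rename f g).Normal
  | .conf _ _, h => ⟨MTm.Normal.rename _ _ h.1, MCo.Normal.rename _ _ h.2.1,
      by simpa [MMach.rename] using h.2.2⟩
end

theorem MMach.rename_substCo (m : MMach) (e : MCo) (f g : ℕ → ℕ) :
    (m.substCo e).rename f g = (m.rename f (liftN g)).substCo (e.rename f g) := by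
  simp only [MMach.substCo_eq_subst, MMach.rename_subst, MMach.subst_rename]
  congr 1; funext n; cases n <;> simp

theorem MMach.rename_substTm (m : MMach) (t : MTm) (f g : ℕ → ℕ) :
    (m.substTm t).rename f g = (m.rename (liftN f) g).substTm (t.rename f g) := by
  simp only [MMach.substTm_eq_subst, MMach.rename_subst, MMach.subst_rename]
  congr 1; funext n; cases n <;> simp

theorem MMach.rename_substTmCo (m : MMach) (t : MTm) (e : MCo) (f g : ℕ → ℕ) :
    (m.substTmCo t e).rename f g
      = (m.rename (liftN f) (liftN g)).substTmCo (t.rename f g) (e.rename f g) := by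
  simp only [MMach.substTmCo_eq_subst, MMach.rename_subst, MMach.subst_rename]
  congr 1 <;> (funext n; cases n <;> simp)

mutual
theorem StepT.rename (f g : ℕ → ℕ) :
    ∀ {t t' : MTm}, StepT t t' → StepT (t.rename f g) (t'.rename f g)
  | _, _, .mu h => .mu (h.rename _ _)
  | _, _, .muPair h => .muPair (h.rename _ _)
  | _, _, .injl h => .injl (h.rename _ _)
  | _, _, .injr h => .injr (h.rename _ _)
theorem StepC.rename (f g : ℕ → ℕ) :
    ∀ {e e' : MCo}, StepC e e' → StepC (e.rename f g) (e'.rename f g)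
  | _, _, .consl _ h => .consl _ (h.rename _ _)
  | _, _, .consr _ h => .consr _ (h.rename _ _)
  | _, _, .mutilde h => .mutilde (h.rename _ _)
  | _, _, .casel _ h => .casel _ (h.rename _ _)
  | _, _, .caser _ h => .caser _ (h.rename _ _)
theorem StepM.rename (f g : ℕ → ℕ) :
    ∀ {m m' : MMach}, StepM m m' → StepM (m.rename f g) (m'.rename f g)
  | _, _, .mu m e => by rw [MMach.rename_substCo]; exact .mu _ _
  | _, _, .mutilde t m => by rw [MMach.rename_substTm]; exact .mutilde _ _
  | _, _, .muPair m u e => by rw [MMach.rename_substTmCo]; exact .muPair _ _ _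
  | _, _, .casel t m₁ m₂ => by rw [MMach.rename_substTm]; exact .casel _ _ _
  | _, _, .caser t m₁ m₂ => by rw [MMach.rename_substTm]; exact .caser _ _ _
  | _, _, .congT _ h => .congT _ (h.rename _ _)
  | _, _, .congC _ h => .congC _ (h.rename _ _)
end

def MTm.WN (t : MTm) : Prop := ∃ t', ReflTransGen StepT t t' ∧ t'.Normal

def MCo.WN (e : MCo) : Prop := ∃ e', ReflTransGen StepC e e' ∧ e'.Normal

def MMach.WN (m : MMach) : Prop := ∃ m', ReflTransGen StepM m m' ∧ m'.Normal

theorem MTm.WN.rename (f g : ℕ → ℕ) {t : MTm} : t.WN → (t.rename f g).WN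
  | ⟨_, h, hn⟩ => ⟨_, h.lift (MTm.rename f g) fun _ _ hs => hs.rename f g, hn.rename f g⟩

theorem MCo.WN.rename (f g : ℕ → ℕ) {e : MCo} : e.WN → (e.rename f g).WN
  | ⟨_, h, hn⟩ => ⟨_, h.lift (MCo.rename f g) fun _ _ hs => hs.rename f g, hn.rename f g⟩

theorem MMach.WN.rename (f g : ℕ → ℕ) {m : MMach} : m.WN → (m.rename f g).WN
  | ⟨_, h, hn⟩ => ⟨_, h.lift (MMach.rename f g) fun _ _ hs => hs.rename f g, hn.rename f g⟩

theorem MMach.WN.of_reduces {m m' : MMach} (h : ReflTransGen StepM m m') : m'.WN → m.WN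
  | ⟨m'', h', hn⟩ => ⟨m'', h.trans h', hn⟩

theorem MMach.WN.of_step {m m' : MMach} (h : StepM m m') : m'.WN → m.WN :=
  .of_reduces (.single h)

theorem MTm.WN.var (n : ℕ) : (MTm.var n).WN := ⟨_, .refl, trivial⟩

theorem MCo.WN.covar (n : ℕ) : (MCo.covar n).WN := ⟨_, .refl, trivial⟩

theorem MTm.WN.injl {t : MTm} : t.WN → (MTm.injl t).WN
  | ⟨_, h, hn⟩ => ⟨_, h.lift MTm.injl fun _ _ => StepT.injl, hn⟩

theorem MTm.WN.injr {t : MTm} : t.WN → (MTm.injr t).WN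
  | ⟨_, h, hn⟩ => ⟨_, h.lift MTm.injr fun _ _ => StepT.injr, hn⟩

theorem MTm.WN.mu {m : MMach} : m.WN → (MTm.mu m).WN
  | ⟨_, h, hn⟩ => ⟨_, h.lift MTm.mu fun _ _ => StepT.mu, hn⟩

theorem MTm.WN.muPair {m : MMach} : m.WN → (MTm.muPair m).WN
  | ⟨_, h, hn⟩ => ⟨_, h.lift MTm.muPair fun _ _ => StepT.muPair, hn⟩

theorem MCo.WN.cons {t : MTm} {e : MCo} : t.WN → e.WN → (MCo.cons t e).WN
  | ⟨t', ht, htn⟩, ⟨e', he, hen⟩ =>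
    ⟨.cons t' e', (ht.lift (MCo.cons · e) fun _ _ => StepC.consl e).trans
      (he.lift (MCo.cons t') fun _ _ => StepC.consr t'), htn, hen⟩

theorem MCo.WN.case {m₁ m₂ : MMach} : m₁.WN → m₂.WN → (MCo.case m₁ m₂).WN
  | ⟨m₁', h₁, hn₁⟩, ⟨m₂', h₂, hn₂⟩ =>
    ⟨.case m₁' m₂', (h₁.lift (MCo.case · m₂) fun _ _ => StepC.casel m₂).trans
      (h₂.lift (MCo.case m₁') fun _ _ => StepC.caser m₁'), hn₁, hn₂⟩

theorem reflTransGen_conf {t t' : MTm} {e e' : MCo} (ht : ReflTransGen StepT t t')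
    (he : ReflTransGen StepC e e') : ReflTransGen StepM (.conf t e) (.conf t' e') :=
  (ht.lift (MMach.conf · e) fun _ _ => StepM.congT e).trans
    (he.lift (MMach.conf t') fun _ _ => StepM.congC t')

theorem IsRedex.of_reflTransGen {t t' : MTm} {e e' : MCo} (ht : ReflTransGen StepT t t')
    (he : ReflTransGen StepC e e') (h : IsRedex t' e') : IsRedex t e := by
  -- a reduction step never changes the head constructor
  induction ht with
  | refl =>
    induction he with
    | refl => exact h
    | tail _ hs ih => exact ih (by cases hs <;> cases t <;> exact h)
  | tail _ hs ih => exact ih (by cases hs <;> cases e' <;> exact h)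

theorem MMach.WN.conf {t : MTm} {e : MCo} (ht : t.WN) (he : e.WN) (h : ¬ IsRedex t e) :
    (MMach.conf t e).WN :=
  let ⟨t', hst, htn⟩ := ht
  let ⟨e', hse, hen⟩ := he
  ⟨.conf t' e', reflTransGen_conf hst hse, htn, hen,
    fun h' => h (IsRedex.of_reflTransGen hst hse h')⟩

theorem MMach.WN.conf_covar {t : MTm} (n : ℕ) (ht : t.WN) : (MMach.conf t (.covar n)).WN := by
  obtain ⟨t', hst, htn⟩ := ht
  refine .of_reduces (reflTransGen_conf hst .refl) ?_
  cases t' with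
  | mu m =>
    -- substituting a co-variable for a co-variable is a renaming, which preserves normality
    obtain ⟨g, hg⟩ : ∃ g : ℕ → ℕ, consC (.covar n) .covar = fun k => .covar (g k) :=
      ⟨fun k => Nat.casesOn k n id, funext fun k => by cases k <;> rfl⟩
    have hm : m.substCo (.covar n) = m.rename id g := by
      rw [MMach.substCo_eq_subst, hg, ← MMach.subst_var_covar]; rfl
    exact .of_step (.mu m _) ⟨_, .refl, hm ▸ MMach.Normal.rename id g htn⟩
  | _ => exact ⟨_, .refl, htn, trivial, id⟩

/-! ### The normalisation interpretation -/

def wnOrth (V : MTm → Prop) (e : MCo) : Prop :=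
  e.WN ∧ ∀ f g : ℕ → ℕ, ∀ v, V v → (MMach.conf v (e.rename f g)).WN

def wnBiorth (V : MTm → Prop) (t : MTm) : Prop :=
  t.WN ∧ ∀ f g : ℕ → ℕ, ∀ e, wnOrth V e → (MMach.conf (t.rename f g) e).WN

def wnValue : Ty → MTm → Prop
  | .base, t => ∃ n, t = .var n
  | .arrow A B, t => (∃ n, t = .var n) ∨ ∃ m, t = .muPair m ∧ m.WN ∧
      ∀ f g : ℕ → ℕ, ∀ u, wnBiorth (wnValue A) u → ∀ e, wnOrth (wnValue B) e →
        ((m.rename (liftN f) (liftN g)).substTmCo u e).WN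
  | .sum A B, t => (∃ n, t = .var n) ∨ (∃ u, t = .injl u ∧ wnBiorth (wnValue A) u) ∨
      (∃ u, t = .injr u ∧ wnBiorth (wnValue B) u)

abbrev wnFalsity (A : Ty) : MCo → Prop := wnOrth (wnValue A)

abbrev wnTruth (A : Ty) : MTm → Prop := wnBiorth (wnValue A)

theorem wnBiorth.rename {V : MTm → Prop} {t : MTm} (f g : ℕ → ℕ) (h : wnBiorth V t) :
    wnBiorth V (t.rename f g) :=
  ⟨h.1.rename f g, fun f' g' e he => by
    simpa using h.2 (fun n => f' (f n)) (fun n => g' (g n)) e he⟩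

theorem wnOrth.rename {V : MTm → Prop} {e : MCo} (f g : ℕ → ℕ) (h : wnOrth V e) :
    wnOrth V (e.rename f g) :=
  ⟨h.1.rename f g, fun f' g' v hv => by
    simpa using h.2 (fun n => f' (f n)) (fun n => g' (g n)) v hv⟩

theorem wnBiorth.conf {V : MTm → Prop} {t : MTm} {e : MCo} (ht : wnBiorth V t) (he : wnOrth V e) :
    (MMach.conf t e).WN := by
  simpa using ht.2 (fun n => n) (fun n => n) e he

theorem wnValue.rename {A : Ty} {v : MTm} (f g : ℕ → ℕ) (h : wnValue A v) :
    wnValue A (v.rename f g) := by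
  cases A with
  | base => obtain ⟨n, rfl⟩ := h; exact ⟨f n, rfl⟩
  | arrow A B =>
    rcases h with ⟨n, rfl⟩ | ⟨m, rfl, hm, hred⟩
    · exact .inl ⟨f n, rfl⟩
    · refine .inr ⟨_, rfl, hm.rename _ _, fun f' g' => ?_⟩
      simpa [liftN_comp] using hred (fun n => f' (f n)) (fun n => g' (g n))
  | sum A B =>
    rcases h with ⟨n, rfl⟩ | ⟨u, rfl, hu⟩ | ⟨u, rfl, hu⟩
    · exact .inl ⟨f n, rfl⟩
    · exact .inr (.inl ⟨_, rfl, hu.rename f g⟩)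
    · exact .inr (.inr ⟨_, rfl, hu.rename f g⟩)

theorem wnValue_var (A : Ty) (n : ℕ) : wnValue A (.var n) := by
  cases A
  · exact ⟨n, rfl⟩
  · exact .inl ⟨n, rfl⟩
  · exact .inl ⟨n, rfl⟩

theorem wnValue.wn {A : Ty} {v : MTm} (h : wnValue A v) : v.WN := by
  cases A with
  | base => obtain ⟨n, rfl⟩ := h; exact .var n
  | arrow A B =>
    rcases h with ⟨n, rfl⟩ | ⟨m, rfl, hm, -⟩
    · exact .var n
    · exact .muPair hm
  | sum A B =>
    rcases h with ⟨n, rfl⟩ | ⟨u, rfl, hu⟩ | ⟨u, rfl, hu⟩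
    · exact .var n
    · exact hu.1.injl
    · exact hu.1.injr

theorem wnValue.wnTruth {A : Ty} {v : MTm} (h : wnValue A v) : wnTruth A v :=
  ⟨h.wn, fun f g e he => by simpa using he.2 (fun n => n) (fun n => n) _ (h.rename f g)⟩

theorem wnTruth_var (A : Ty) (n : ℕ) : wnTruth A (.var n) := (wnValue_var A n).wnTruth

theorem wnFalsity_covar (A : Ty) (n : ℕ) : wnFalsity A (.covar n) :=
  ⟨.covar n, fun _ _ _ hv => .conf_covar _ hv.wn⟩

theorem wnFalsity_cons {A B : Ty} {u : MTm} {e : MCo} (hu : wnTruth A u) (he : wnFalsity B e) :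
    wnFalsity (.arrow A B) (.cons u e) := by
  refine ⟨.cons hu.1 he.1, fun f g v hv => ?_⟩
  rcases hv with ⟨n, rfl⟩ | ⟨m, rfl, -, hred⟩
  · exact .conf (.var n) (.cons (hu.1.rename f g) (he.1.rename f g)) id
  · refine .of_step (.muPair m _ _) ?_
    simpa [liftN_id] using hred (fun n => n) (fun n => n) _ (hu.rename f g) _ (he.rename f g)

theorem wnFalsity_case {A B : Ty} {m₁ m₂ : MMach} (h₁ : m₁.WN) (h₂ : m₂.WN)
    (hred₁ : ∀ f g : ℕ → ℕ, ∀ p, wnTruth A p → ((m₁.rename (liftN f) g).substTm p).WN)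
    (hred₂ : ∀ f g : ℕ → ℕ, ∀ p, wnTruth B p → ((m₂.rename (liftN f) g).substTm p).WN) :
    wnFalsity (.sum A B) (.case m₁ m₂) := by
  refine ⟨.case h₁ h₂, fun f g v hv => ?_⟩
  rcases hv with ⟨n, rfl⟩ | ⟨p, rfl, hp⟩ | ⟨p, rfl, hp⟩
  · exact .conf (.var n) (.case (h₁.rename _ _) (h₂.rename _ _)) id
  · exact .of_step (.casel p _ _) (hred₁ f g p hp)
  · exact .of_step (.caser p _ _) (hred₂ f g p hp)

theorem wnTruth_mu {A : Ty} {m : MMach}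
    (h : ∀ f g : ℕ → ℕ, ∀ e, wnFalsity A e → ((m.rename f (liftN g)).substCo e).WN) :
    wnTruth A (.mu m) := by
  refine ⟨.mu ?_, fun f g e he => .of_step (.mu _ e) (h f g e he)⟩
  rw [← m.substCo_covar_zero_rename_liftN_succ]
  exact h _ _ _ (wnFalsity_covar A 0)

def WNEnv (Γ : List Ty) (σ : ℕ → MTm) : Prop := ∀ n A, Γ[n]? = some A → wnTruth A (σ n)

theorem WNEnv.rename {Γ : List Ty} {σ : ℕ → MTm} (f g : ℕ → ℕ) (h : WNEnv Γ σ) :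
    WNEnv Γ fun n => (σ n).rename f g :=
  fun n A hA => (h n A hA).rename f g

theorem WNEnv.cons {Γ : List Ty} {A : Ty} {σ : ℕ → MTm} {u : MTm} (h : WNEnv Γ σ)
    (hu : wnTruth A u) : WNEnv (A :: Γ) (consT u σ)
  | 0, _, hB => by cases hB; exact hu
  | n + 1, B, hB => h n B hB

theorem WNEnv.upT {Γ : List Ty} {A : Ty} {σ : ℕ → MTm} (τ : ℕ → MCo) (h : WNEnv Γ σ) :
    WNEnv (A :: Γ) (upT σ τ).1
  | 0, _, hB => by cases hB; exact wnTruth_var _ 0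
  | n + 1, B, hB => (h n B hB).rename _ _

theorem wnTruth_transl_subst {Γ : List Ty} {t : LTm} {A : Ty} (ht : HasTy Γ t A) :
    ∀ (σ : ℕ → MTm) (τ : ℕ → MCo), WNEnv Γ σ → wnTruth A ((transl t).subst σ τ) := by
  induction ht with
  | var h => exact fun σ τ hσ => hσ _ _ h
  | lam _ ih =>
    intro σ τ hσ
    refine wnValue.wnTruth (.inr ⟨_, rfl, ?_, fun f g u hu e he => ?_⟩)
    · exact .conf_covar 0 (ih _ _ ((hσ.rename id Nat.succ).upT _)).1
    · rw [MMach.substTmCo_rename_subst_upT_upC]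
      exact (ih _ _ ((hσ.rename f g).cons hu)).conf he
  | app _ _ iht ihu =>
    intro σ τ hσ
    refine wnTruth_mu fun f g e he => ?_
    rw [MMach.substCo_rename_subst_upC]
    exact (iht _ _ (hσ.rename f g)).conf (wnFalsity_cons (ihu _ _ (hσ.rename f g)) he)
  | injl _ ih => exact fun σ τ hσ => wnValue.wnTruth (.inr (.inl ⟨_, rfl, ih σ τ hσ⟩))
  | injr _ ih => exact fun σ τ hσ => wnValue.wnTruth (.inr (.inr ⟨_, rfl, ih σ τ hσ⟩))
  | case _ _ _ iht ih₁ ih₂ =>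
    intro σ τ hσ
    refine wnTruth_mu fun f g e he => ?_
    rw [MMach.substCo_rename_subst_upC]
    refine (iht _ _ (hσ.rename f g)).conf
      (wnFalsity_case ?_ ?_ (fun f' g' p hp => ?_) (fun f' g' p hp => ?_))
    · exact (ih₁ _ _ ((hσ.rename f g).upT _)).conf (he.rename _ _)
    · exact (ih₂ _ _ ((hσ.rename f g).upT _)).conf (he.rename _ _)
    · rw [MMach.substTm_rename_subst_upT]
      exact (ih₁ _ _ ((hσ.rename f g |>.rename f' g').cons hp)).conf (he.rename f' g')
    · rw [MMach.substTm_rename_subst_upT]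
      exact (ih₂ _ _ ((hσ.rename f g |>.rename f' g').cons hp)).conf (he.rename f' g')

/-! ### The canonicity interpretation -/

def MMach.Canonical (m : MMach) : Prop :=
  ∃ u m', ReflTransGen StepM m m' ∧ m'.Normal ∧
    (m' = .conf (.injl u) (.covar 0) ∨ m' = .conf (.injr u) (.covar 0))

theorem MMach.Canonical.of_step {m m' : MMach} (h : StepM m m') : m'.Canonical → m.Canonical
  | ⟨u, m'', h', hn, hu⟩ => ⟨u, m'', .head h h', hn, hu⟩

def canOrth (V : MTm → Prop) (e : MCo) : Prop := ∀ v, V v → (MMach.conf v e).Canonical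

def canBiorth (V : MTm → Prop) (t : MTm) : Prop := ∀ e, canOrth V e → (MMach.conf t e).Canonical

def canValue : Ty → MTm → Prop
  -- adequacy never inspects the base type, so any set of values would do
  | .base, _ => False
  | .arrow A B, t => ∃ m, t = .muPair m ∧ ∀ u, wnTruth A u → canBiorth (canValue A) u →
      ∀ e, canOrth (canValue B) e → (m.substTmCo u e).Canonical
  | .sum A B, t => (∃ u, t = .injl u ∧ wnTruth A u ∧ canBiorth (canValue A) u) ∨
      (∃ u, t = .injr u ∧ wnTruth B u ∧ canBiorth (canValue B) u)

abbrev canFalsity (A : Ty) : MCo → Prop := canOrth (canValue A)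

abbrev canTruth (A : Ty) : MTm → Prop := canBiorth (canValue A)

theorem canValue.canTruth {A : Ty} {v : MTm} (h : canValue A v) : canTruth A v :=
  fun _ he => he v h

theorem canFalsity_covar_zero (A B : Ty) : canFalsity (.sum A B) (.covar 0) := by
  rintro _ (⟨u, rfl, ⟨⟨u', hu, hn⟩, -⟩, -⟩ | ⟨u, rfl, ⟨⟨u', hu, hn⟩, -⟩, -⟩)
  · exact ⟨u', _, reflTransGen_conf (hu.lift MTm.injl fun _ _ => StepT.injl) .refl,
      ⟨hn, trivial, id⟩, .inl rfl⟩
  · exact ⟨u', _, reflTransGen_conf (hu.lift MTm.injr fun _ _ => StepT.injr) .refl,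
      ⟨hn, trivial, id⟩, .inr rfl⟩

theorem canFalsity_cons {A B : Ty} {u : MTm} {e : MCo} (hu : wnTruth A u) (hu' : canTruth A u)
    (he : canFalsity B e) : canFalsity (.arrow A B) (.cons u e) := by
  rintro _ ⟨m, rfl, hred⟩
  exact .of_step (.muPair m u e) (hred u hu hu' e he)

theorem canFalsity_case {A B : Ty} {m₁ m₂ : MMach}
    (h₁ : ∀ p, wnTruth A p → canTruth A p → (m₁.substTm p).Canonical)
    (h₂ : ∀ p, wnTruth B p → canTruth B p → (m₂.substTm p).Canonical) :
    canFalsity (.sum A B) (.case m₁ m₂) := by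
  rintro _ (⟨p, rfl, hp, hp'⟩ | ⟨p, rfl, hp, hp'⟩)
  · exact .of_step (.casel p m₁ m₂) (h₁ p hp hp')
  · exact .of_step (.caser p m₁ m₂) (h₂ p hp hp')

theorem canTruth_mu {A : Ty} {m : MMach} (h : ∀ e, canFalsity A e → (m.substCo e).Canonical) :
    canTruth A (.mu m) :=
  fun e he => .of_step (.mu m e) (h e he)

def CanEnv (Γ : List Ty) (σ : ℕ → MTm) : Prop :=
  ∀ n A, Γ[n]? = some A → wnTruth A (σ n) ∧ canTruth A (σ n)

theorem CanEnv.wnEnv {Γ : List Ty} {σ : ℕ → MTm} (h : CanEnv Γ σ) : WNEnv Γ σ :=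
  fun n A hA => (h n A hA).1

theorem CanEnv.cons {Γ : List Ty} {A : Ty} {σ : ℕ → MTm} {u : MTm} (h : CanEnv Γ σ)
    (hu : wnTruth A u) (hu' : canTruth A u) : CanEnv (A :: Γ) (consT u σ)
  | 0, _, hB => by cases hB; exact ⟨hu, hu'⟩
  | n + 1, B, hB => h n B hB

theorem canTruth_transl_subst {Γ : List Ty} {t : LTm} {A : Ty} (ht : HasTy Γ t A) :
    ∀ (σ : ℕ → MTm) (τ : ℕ → MCo), CanEnv Γ σ → canTruth A ((transl t).subst σ τ) := by
  induction ht with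
  | var h => exact fun σ τ hσ => (hσ _ _ h).2
  | lam _ ih =>
    intro σ τ hσ
    refine canValue.canTruth ⟨_, rfl, fun u hu hu' e he => ?_⟩
    rw [MMach.substTmCo_subst_upT_upC]
    exact ih _ _ (hσ.cons hu hu') e he
  | app _ hu iht ihu =>
    intro σ τ hσ
    refine canTruth_mu fun e he => ?_
    rw [MMach.substCo_subst_upC]
    exact iht _ _ hσ _ (canFalsity_cons (wnTruth_transl_subst hu _ _ hσ.wnEnv) (ihu _ _ hσ) he)
  | injl ht ih =>
    exact fun σ τ hσ => canValue.canTruth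
      (.inl ⟨_, rfl, wnTruth_transl_subst ht σ τ hσ.wnEnv, ih σ τ hσ⟩)
  | injr ht ih =>
    exact fun σ τ hσ => canValue.canTruth
      (.inr ⟨_, rfl, wnTruth_transl_subst ht σ τ hσ.wnEnv, ih σ τ hσ⟩)
  | case _ _ _ iht ih₁ ih₂ =>
    intro σ τ hσ
    refine canTruth_mu fun e he => ?_
    rw [MMach.substCo_subst_upC]
    refine iht _ _ hσ _ (canFalsity_case (fun p hp hp' => ?_) (fun p hp hp' => ?_))
    · rw [MMach.substTm_subst_upT]
      exact ih₁ _ _ (hσ.cons hp hp') e he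
    · rw [MMach.substTm_subst_upT]
      exact ih₂ _ _ (hσ.cons hp hp') e he

/-- Canonicity for sums: for every closed well-typed term ⊢ t : A₁ + A₂, the
configuration ⟨⟦t⟧ | α⟩ reduces to a normal configuration of the form
⟨inj₁ u | α⟩ or ⟨inj₂ u | α⟩. -/
theorem sum_canonicity {t : LTm} {A₁ A₂ : Ty} (ht : HasTy [] t (.sum A₁ A₂)) :
    ∃ m : MMach, Relation.ReflTransGen StepM (.conf (transl t) (.covar 0)) m ∧
      (¬∃ m', StepM m m') ∧
      ∃ u : MTm, m = .conf (.injl u) (.covar 0) ∨ m = .conf (.injr u) (.covar 0) := by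
  have hclosed : CanEnv [] .var := fun _ _ h => by simp at h
  obtain ⟨u, m, hred, hn, hm⟩ :=
    canTruth_transl_subst ht .var .covar hclosed _ (canFalsity_covar_zero A₁ A₂)
  rw [MTm.subst_id] at hred
  exact ⟨m, hred, fun ⟨_, hs⟩ => hs.not_normal hn, u, hm⟩
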